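/- The first coefficient of the binary cubic form a_t n_u k_θ · x₊ equals t³ sin(6πθ)/(108)^{1/4}, where x₊ = (3v²w − w³)/(108)^{1/4}. -/

import Mathlib

open Real Matrix

/-- The value of the binary cubic form with coefficient vector `x` at `(v,w)`. -/
noncomputable def cubicVal (x : Fin 4 → ℝ) (v w : ℝ) : ℝ :=
  x 0 * v^3 + x 1 * v^2 * w + x 2 * v * w^2 + x 3 * w^3

/-- `a_t = diag(t, 1/t)`. -/
noncomputable def aMat (t : ℝ) : Matrix (Fin 2) (Fin 2) ℝ := !![t, 0; 0, t⁻¹]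

/-- `n_u`, the lower-triangular unipotent with entry `u`. -/
def nMat (u : ℝ) : Matrix (Fin 2) (Fin 2) ℝ := !![1, 0; u, 1]

/-- `k_θ`, rotation by angle `2πθ`. -/
noncomputable def kMat (θ : ℝ) : Matrix (Fin 2) (Fin 2) ℝ :=
  !![Real.cos (2*π*θ), Real.sin (2*π*θ); -Real.sin (2*π*θ), Real.cos (2*π*θ)]

/-!
The `v³`-coefficient of `g · x` is `(g · x)(1, 0) = x(g₀₀, g₀₁)`, i.e. `x` evaluated on the first
row of `g`. For `g = a_t n_u k_θ` that row is `t (cos 2πθ, sin 2πθ)`, so by homogeneity the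
coefficient is `t³ x₊(cos α, sin α) = t³ (3 cos² α sin α − sin³ α)/108^{1/4}`, and the
triple-angle formula turns the bracket into `sin 3α`.
-/

theorem cubicVal_one_zero (x : Fin 4 → ℝ) : cubicVal x 1 0 = x 0 := by
  simp [cubicVal]

theorem cubicVal_mul_mul (x : Fin 4 → ℝ) (t v w : ℝ) :
    cubicVal x (t * v) (t * w) = t ^ 3 * cubicVal x v w := by
  simp only [cubicVal]
  ring

theorem aMat_mul_nMat_mul_kMat_zero_zero (t u θ : ℝ) :
    (aMat t * nMat u * kMat θ) 0 0 = t * Real.cos (2 * π * θ) := by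
  simp [aMat, nMat, kMat, Matrix.mul_apply, Fin.sum_univ_two]

theorem aMat_mul_nMat_mul_kMat_zero_one (t u θ : ℝ) :
    (aMat t * nMat u * kMat θ) 0 1 = t * Real.sin (2 * π * θ) := by
  simp [aMat, nMat, kMat, Matrix.mul_apply, Fin.sum_univ_two]

theorem cubicVal_cos_sin (c α : ℝ) :
    cubicVal ![0, 3 / c, 0, -1 / c] (Real.cos α) (Real.sin α) = Real.sin (3 * α) / c := by
  simp only [cubicVal, Matrix.cons_val_zero, Matrix.cons_val_one, Matrix.cons_val_two,
    Matrix.cons_val_three, Matrix.head_cons, Matrix.tail_cons, Real.sin_three_mul]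
  rw [Real.cos_sq']
  ring

theorem first_coeff_xplus_general (t u θ : ℝ) (y : Fin 4 → ℝ)
    (hy : ∀ v w : ℝ, cubicVal y v w
        = cubicVal ![0, 3 / (108:ℝ)^((1:ℝ)/4), 0, -1 / (108:ℝ)^((1:ℝ)/4)]
            (v * (aMat t * nMat u * kMat θ) 0 0 + w * (aMat t * nMat u * kMat θ) 1 0)
            (v * (aMat t * nMat u * kMat θ) 0 1 + w * (aMat t * nMat u * kMat θ) 1 1)) :
    y 0 = t^3 * Real.sin (6*π*θ) / (108:ℝ)^((1:ℝ)/4) := by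
  have h := hy 1 0
  simp only [one_mul, zero_mul, add_zero, aMat_mul_nMat_mul_kMat_zero_zero,
    aMat_mul_nMat_mul_kMat_zero_one, cubicVal_mul_mul, cubicVal_cos_sin,
    cubicVal_one_zero] at h
  rw [h, show 6 * π * θ = 3 * (2 * π * θ) by ring]
  ring

/-- The coefficient of `v³` in `a_t n_u k_θ · x₊` equals `t³ sin(6πθ)/(108)^{1/4}`,
where `x₊ = (3v²w − w³)/(108)^{1/4}` and the action is `(g·x)(v,w) = x((v,w)g)`. -/
theorem first_coeff_xplus (t u θ : ℝ) (ht : 0 < t) (y : Fin 4 → ℝ)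
    (hy : ∀ v w : ℝ, cubicVal y v w
        = cubicVal ![0, 3 / (108:ℝ)^((1:ℝ)/4), 0, -1 / (108:ℝ)^((1:ℝ)/4)]
            (v * (aMat t * nMat u * kMat θ) 0 0 + w * (aMat t * nMat u * kMat θ) 1 0)
            (v * (aMat t * nMat u * kMat θ) 0 1 + w * (aMat t * nMat u * kMat θ) 1 1)) :
    y 0 = t^3 * Real.sin (6*π*θ) / (108:ℝ)^((1:ℝ)/4) :=
  first_coeff_xplus_general t u θ y hy
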